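/- arXiv:2106.12725 — 2 statements merged into one kernel-verified Lean document; each statement's English description precedes it below -/
import Mathlib

section
/- Let j ∈ R_{s,H} (for some string H and integer s ≥ 0). For any j′ ∈ [1..n], LCE(j,j′) ≥ 3τ−1 holds if and only if j′ ∈ R_{s,H}. Moreover, if j′ ∈ R_{s,H} then, letting t = rend(j) − j and t′ = rend(j′) − j′, it holds LCE(j,j′) ≥ min(t,t′) and: (1) if type(j) ≠ type(j′), then T[j..n] ≺ T[j′..n] if and only if type(j) < type(j′); (2) if type(j) = type(j′) = −1 and t ≠ t′, then T[j..n] ≺ T[j′..n] if and only if t < t′; (3) if type(j) = type(j′) = +1 and t ≠ t′, then T[j..n] ≺ T[j′..n] if and only if t > t′; (4) if type(j) ≠ type(j′) or t ≠ t′, then LCE(j,j′) = min(t,t′). -/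
open scoped Classical

namespace CSA

/-- Character of a 1-indexed string at position `i` (junk value 0 out of range). -/
def idx (S : List ℕ) (i : ℕ) : ℕ := S.getD (i - 1) 0

/-- Substring `S[i..j)` in the 1-indexed, half-open convention. -/
def sub (S : List ℕ) (i j : ℕ) : List ℕ := (S.drop (i - 1)).take (j - i)

/-- Suffix `S[i..|S|]` (1-indexed). -/
def suf (S : List ℕ) (i : ℕ) : List ℕ := S.drop (i - 1)

/-- Length of the longest common prefix of two strings. -/
def lcp (A B : List ℕ) : ℕ := ((A.zip B).takeWhile fun p => p.1 == p.2).length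

/-- `LCE T j₁ j₂` is the length of the longest common prefix of `T[j₁..n]` and `T[j₂..n]`. -/
def LCE (T : List ℕ) (j₁ j₂ : ℕ) : ℕ := lcp (suf T j₁) (suf T j₂)

/-- `p` is a period of `S`. -/
def IsPeriod (S : List ℕ) (p : ℕ) : Prop :=
  1 ≤ p ∧ p ≤ S.length ∧ ∀ i, i + p < S.length → S.getD i 0 = S.getD (i + p) 0

/-- The shortest period of `S`. -/
noncomputable def per (S : List ℕ) : ℕ := sInf {p | IsPeriod S p}

/-- `R = {i ∈ [1..n−3τ+2] : per(T[i..i+3τ−1)) ≤ τ/3}`. -/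
noncomputable def R (T : List ℕ) (τ : ℕ) : Set ℕ :=
  {i | 1 ≤ i ∧ i + 3 * τ ≤ T.length + 2 ∧ 3 * per (sub T i (i + 3 * τ - 1)) ≤ τ}

/-- `rend(j) = min{j′ ≥ j : j′ ∉ R} + 3τ − 2`. -/
noncomputable def rend (T : List ℕ) (τ j : ℕ) : ℕ :=
  sInf {j' | j ≤ j' ∧ j' ∉ R T τ} + 3 * τ - 2

/-- `L-root(j)`: lexicographically smallest among `{T[j+t..j+t+p) : 0 ≤ t < p}`
where `p = per(T[j..j+3τ−1))`. -/
noncomputable def Lroot (T : List ℕ) (τ j : ℕ) : List ℕ :=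
  WithTop.untopD [] ((Finset.range (per (sub T j (j + 3 * τ - 1)))).image fun t =>
      sub T (j + t) (j + t + per (sub T j (j + 3 * τ - 1)))).min

/-- `L-head(j)`: the (unique) `s ∈ [0..p)` with `T[j+s..j+s+p) = L-root(j)`. -/
noncomputable def Lhead (T : List ℕ) (τ j : ℕ) : ℕ :=
  sInf {s | s < per (sub T j (j + 3 * τ - 1)) ∧
    sub T (j + s) (j + s + per (sub T j (j + 3 * τ - 1))) = Lroot T τ j}

noncomputable def Lexp (T : List ℕ) (τ j : ℕ) : ℕ :=
  (rend T τ j - j - Lhead T τ j) / per (sub T j (j + 3 * τ - 1))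

noncomputable def Ltail (T : List ℕ) (τ j : ℕ) : ℕ :=
  (rend T τ j - j - Lhead T τ j) % per (sub T j (j + 3 * τ - 1))

noncomputable def rendfull (T : List ℕ) (τ j : ℕ) : ℕ := rend T τ j - Ltail T τ j

/-- `type(j) = +1` if `rend(j) ≤ n` and `T[rend(j)] > T[rend(j)−p]`, and `−1` otherwise. -/
noncomputable def typ (T : List ℕ) (τ j : ℕ) : ℤ :=
  if rend T τ j ≤ T.length ∧
      idx T (rend T τ j - per (sub T j (j + 3 * τ - 1))) < idx T (rend T τ j)
    then 1 else -1

noncomputable def Rminus (T : List ℕ) (τ : ℕ) : Set ℕ := {j ∈ R T τ | typ T τ j = -1}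

noncomputable def RH (T : List ℕ) (τ : ℕ) (H : List ℕ) : Set ℕ :=
  {j ∈ R T τ | Lroot T τ j = H}

noncomputable def RsH (T : List ℕ) (τ s : ℕ) (H : List ℕ) : Set ℕ :=
  {j ∈ R T τ | Lroot T τ j = H ∧ Lhead T τ j = s}

noncomputable def RminusH (T : List ℕ) (τ : ℕ) (H : List ℕ) : Set ℕ :=
  Rminus T τ ∩ RH T τ H

noncomputable def RminusSH (T : List ℕ) (τ s : ℕ) (H : List ℕ) : Set ℕ :=
  Rminus T τ ∩ RsH T τ s H

noncomputable def Rprime (T : List ℕ) (τ : ℕ) : Set ℕ := {j ∈ R T τ | j - 1 ∉ R T τ}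

/-- `Occ(P,S)`: the set of (1-indexed) starting positions of occurrences of `P` in `S`. -/
def OccSet (P S : List ℕ) : Set ℕ :=
  {j | 1 ≤ j ∧ j + P.length ≤ S.length + 1 ∧ sub S j (j + P.length) = P}

noncomputable def RangeBeg (P T : List ℕ) : ℕ :=
  Set.ncard {i | 1 ≤ i ∧ i ≤ T.length ∧ suf T i < P}

noncomputable def RangeEnd (P T : List ℕ) : ℕ := RangeBeg P T + (OccSet P T).ncard

/-- `ISA[j]`: the lexicographic rank of the suffix `T[j..n]` among all suffixes of `T`. -/
noncomputable def ISA (T : List ℕ) (j : ℕ) : ℕ :=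
  Set.ncard {j' | 1 ≤ j' ∧ j' ≤ T.length ∧ suf T j' ≤ suf T j}

/-- `succ_S(i) = min{j ∈ S ∪ {n−2τ+2} : j ≥ i}`. -/
noncomputable def succS (T : List ℕ) (τ : ℕ) (Sync : Set ℕ) (i : ℕ) : ℕ :=
  sInf {j | i ≤ j ∧ (j ∈ Sync ∨ j = T.length + 2 - 2 * τ)}

/-- The set `D` of distinguishing prefixes. -/
noncomputable def Dset (T : List ℕ) (τ : ℕ) (Sync : Set ℕ) : Set (List ℕ) :=
  {X | ∃ i, 1 ≤ i ∧ i + 3 * τ ≤ T.length + 2 ∧ i ∉ R T τ ∧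
    X = sub T i (succS T τ Sync i + 2 * τ)}

/-- `T^∞[i] = T[1 + ((i−1) mod n)]` for `i : ℤ`. -/
def tinf (T : List ℕ) (i : ℤ) : ℕ := idx T (((i - 1).emod (T.length : ℤ)).toNat + 1)

/-- `W[i]`: the reverse of `T^∞[s^lex_i − τ .. s^lex_i + 2τ)`. -/
def Wstr (T : List ℕ) (τ : ℕ) (slex : ℕ → ℕ) (i : ℕ) : List ℕ :=
  ((List.range (3 * τ)).map fun k => tinf T ((slex i : ℤ) - (τ : ℤ) + (k : ℤ))).reverse

/- Pattern versions of the `L`-decomposition functions. -/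

noncomputable def perP (τ : ℕ) (P : List ℕ) : ℕ := per (P.take (3 * τ - 1))

/-- A pattern is periodic if `|P| ≥ 3τ−1` and `per(P[1..3τ−1]) ≤ τ/3`. -/
noncomputable def Periodic (τ : ℕ) (P : List ℕ) : Prop :=
  3 * τ - 1 ≤ P.length ∧ 3 * perP τ P ≤ τ

noncomputable def pend (τ : ℕ) (P : List ℕ) : ℕ :=
  1 + perP τ P + lcp P (P.drop (perP τ P))

noncomputable def LrootP (τ : ℕ) (P : List ℕ) : List ℕ :=
  WithTop.untopD [] ((Finset.range (perP τ P)).image fun t => (P.drop t).take (perP τ P)).min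

noncomputable def LheadP (τ : ℕ) (P : List ℕ) : ℕ :=
  sInf {s | s < perP τ P ∧ (P.drop s).take (perP τ P) = LrootP τ P}

noncomputable def LexpP (τ : ℕ) (P : List ℕ) : ℕ :=
  (pend τ P - 1 - LheadP τ P) / perP τ P

noncomputable def LtailP (τ : ℕ) (P : List ℕ) : ℕ :=
  (pend τ P - 1 - LheadP τ P) % perP τ P

noncomputable def pendfullP (τ : ℕ) (P : List ℕ) : ℕ := pend τ P - LtailP τ P

noncomputable def typP (τ : ℕ) (P : List ℕ) : ℤ :=
  if pend τ P ≤ P.length ∧ idx P (pend τ P - perP τ P) < idx P (pend τ P)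
    then 1 else -1

/-- `pow(H)`: the prefix of length `|H|·⌈τ/|H|⌉` of `H^∞`. -/
def powS (τ : ℕ) (H : List ℕ) : List ℕ :=
  (List.replicate ((τ + H.length - 1) / H.length) H).flatten

/-!
Inside a run `j ∈ R` the text `T[j..rend j)` is periodic with period `p = per(T[j..j+3τ-1))`:
consecutive windows each have a period at most `τ/3`, and they overlap enough to pass `p` along.
Hence `T[j..rend j)` is a prefix of the infinite word `H^∞` read from the offset fixed by
`s = L-head(j)`, and it leaves that word at `rend j` upwards (type `+1`), downwards, or by
ending (type `-1`). Two suffixes from `R_{s,H}` follow the same infinite word, so they agree up to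
the earlier exit point, and the exit directions decide their order. Conversely, a common prefix of
length `3τ - 1` means equal first windows, and `L-root`, `L-head` depend on that window only.
-/

section LongestCommonPrefix

variable {A B : List ℕ} {k : ℕ}

lemma lcp_cons (a b : ℕ) (A B : List ℕ) :
    lcp (a :: A) (b :: B) = if a = b then lcp A B + 1 else 0 := by
  by_cases h : a = b <;> simp [lcp, h]

lemma lcp_comm (A B : List ℕ) : lcp A B = lcp B A := by
  induction A generalizing B with
  | nil => cases B <;> simp [lcp]
  | cons a A ih =>
    cases B with
    | nil => simp [lcp]
    | cons b B => simp only [lcp_cons, ih B, eq_comm]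

lemma lcp_le_length_left (A B : List ℕ) : lcp A B ≤ A.length := by
  induction A generalizing B with
  | nil => simp [lcp]
  | cons a A ih =>
    cases B with
    | nil => simp [lcp]
    | cons b B => rw [lcp_cons]; split <;> simp [ih B]

lemma lcp_le_length_right (A B : List ℕ) : lcp A B ≤ B.length :=
  lcp_comm A B ▸ lcp_le_length_left B A

lemma le_lcp_of_getD_eq (hA : k ≤ A.length) (hB : k ≤ B.length)
    (h : ∀ i < k, A.getD i 0 = B.getD i 0) : k ≤ lcp A B := by
  induction k generalizing A B with
  | zero => exact Nat.zero_le _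
  | succ k ih =>
    obtain ⟨a, A, rfl⟩ := List.exists_cons_of_length_pos (by omega : 0 < A.length)
    obtain ⟨b, B, rfl⟩ := List.exists_cons_of_length_pos (by omega : 0 < B.length)
    have hab : a = b := by simpa using h 0 (by omega)
    rw [lcp_cons, if_pos hab]
    have := ih (A := A) (B := B) (by simpa using hA) (by simpa using hB)
      (fun i hi => by simpa using h (i + 1) (by omega))
    omega

lemma take_eq_take_of_le_lcp (h : k ≤ lcp A B) : A.take k = B.take k := by
  induction A generalizing B k with
  | nil => simp_all [lcp]
  | cons a A ih =>
    cases B with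
    | nil => simp_all [lcp]
    | cons b B =>
      cases k with
      | zero => rfl
      | succ k =>
        rw [lcp_cons] at h
        split at h
        · simp [*, ih (by omega : k ≤ lcp A B)]
        · omega

lemma lt_and_lcp_eq_of_first_diff (hagree : ∀ i < k, A.getD i 0 = B.getD i 0)
    (hkB : k < B.length) (hdiff : k = A.length ∨ (k < A.length ∧ A.getD k 0 < B.getD k 0)) :
    A < B ∧ lcp A B = k := by
  induction k generalizing A B with
  | zero =>
    obtain ⟨b, B, rfl⟩ := List.exists_cons_of_length_pos hkB
    cases A with
    | nil => exact ⟨List.Lex.nil, by simp [lcp]⟩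
    | cons a A =>
      have hab : a < b := by simpa using hdiff
      exact ⟨List.Lex.rel hab, by simp [lcp_cons, hab.ne]⟩
  | succ k ih =>
    obtain ⟨b, B, rfl⟩ := List.exists_cons_of_length_pos (by omega : 0 < B.length)
    cases A with
    | nil => simp at hdiff
    | cons a A =>
      have hab : a = b := by simpa using hagree 0 (by omega)
      subst hab
      obtain ⟨hlt, hlcp⟩ := ih (A := A) (B := B)
        (fun i hi => by simpa using hagree (i + 1) (by omega)) (by simpa using hkB)
        (by simpa using hdiff)
      exact ⟨List.Lex.cons hlt, by simp [lcp_cons, hlcp]⟩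

end LongestCommonPrefix

section Exits

variable {A B : List ℕ} {c : ℕ → ℕ} {t t' : ℕ}

/-- Running out of letters counts as leaving `c` downwards, since a proper prefix is smaller. -/
def ExitsBelow (A : List ℕ) (c : ℕ → ℕ) (t : ℕ) : Prop :=
  t = A.length ∨ (t < A.length ∧ A.getD t 0 < c t)

def ExitsAbove (A : List ℕ) (c : ℕ → ℕ) (t : ℕ) : Prop :=
  t < A.length ∧ c t < A.getD t 0

lemma lt_and_lcp_eq_of_exits (hA : ∀ i < t, A.getD i 0 = c i) (hB : ∀ i < t', B.getD i 0 = c i)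
    (htA : t ≤ A.length) (htB : t' ≤ B.length)
    (h : (ExitsBelow A c t ∧ t < t') ∨ (ExitsAbove B c t' ∧ t' < t) ∨
      (ExitsBelow A c t ∧ ExitsAbove B c t')) :
    A < B ∧ lcp A B = min t t' := by
  have below (hA' : ExitsBelow A c t) (hlt : t < t') : A < B ∧ lcp A B = min t t' := by
    rw [min_eq_left hlt.le]
    refine lt_and_lcp_eq_of_first_diff (fun i hi => (hA i hi).trans (hB i (by omega)).symm)
      (by omega) ?_
    rw [hB t hlt]
    exact hA'
  have above (hB' : ExitsAbove B c t') (hlt : t' < t) : A < B ∧ lcp A B = min t t' := by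
    rw [min_eq_right hlt.le]
    refine lt_and_lcp_eq_of_first_diff (fun i hi => (hA i (by omega)).trans (hB i hi).symm)
      hB'.1 (Or.inr ⟨by omega, ?_⟩)
    rw [hA t' hlt]
    exact hB'.2
  rcases h with ⟨hA', hlt⟩ | ⟨hB', hlt⟩ | ⟨hA', hB'⟩
  · exact below hA' hlt
  · exact above hB' hlt
  · rcases lt_trichotomy t t' with hlt | rfl | hlt
    · exact below hA' hlt
    · rw [min_self]
      refine lt_and_lcp_eq_of_first_diff (fun i hi => (hA i hi).trans (hB i hi).symm) hB'.1 ?_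
      exact hA'.imp_right fun h => ⟨h.1, h.2.trans hB'.2⟩
    · exact above hB' hlt

end Exits

section Strings

variable {T : List ℕ} {i j k : ℕ}

lemma suf_getD (hj : 1 ≤ j) (i : ℕ) : (suf T j).getD i 0 = idx T (j + i) := by
  simp only [suf, idx, List.getD_eq_getElem?_getD, List.getElem?_drop]
  congr 2
  omega

lemma length_suf (T : List ℕ) (j : ℕ) : (suf T j).length = T.length - (j - 1) := by
  simp [suf]

lemma sub_getD (hj : 1 ≤ j) (hi : i < k - j) : (sub T j k).getD i 0 = idx T (j + i) := by
  simp only [sub, idx, List.getD_eq_getElem?_getD, List.getElem?_take, hi, if_pos,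
    List.getElem?_drop]
  congr 2
  omega

lemma length_sub (hj : 1 ≤ j) (hk : k - 1 ≤ T.length) : (sub T j k).length = k - j := by
  simp only [sub, List.length_take, List.length_drop]
  omega

lemma sub_add_eq_take_suf (T : List ℕ) (j k : ℕ) : sub T j (j + k) = (suf T j).take k := by
  simp [sub, suf]

lemma sub_add_eq_take_drop_sub (hj : 1 ≤ j) {t p w : ℕ} (htp : t + p ≤ w) :
    sub T (j + t) (j + t + p) = ((sub T j (j + w)).drop t).take p := by
  simp only [sub, List.drop_take, List.drop_drop, List.take_take]
  rw [show j - 1 + t = j + t - 1 by omega]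
  congr 1
  omega

end Strings

lemma per_isPeriod {S : List ℕ} (h : 1 ≤ S.length) : IsPeriod S (per S) :=
  Nat.sInf_mem (s := {p | IsPeriod S p})
    ⟨S.length, h, le_rfl, fun _ hi => absurd hi (by omega)⟩

lemma per_le {S : List ℕ} {p : ℕ} (h : IsPeriod S p) : per S ≤ p :=
  Nat.sInf_le h

lemma eq_of_modEq_of_periodicOn {α : Type*} {f : ℕ → α} {a b p x y : ℕ}
    (hper : ∀ e, a + p ≤ e → e < b → f (e - p) = f e)
    (hx : a ≤ x) (hxb : x < b) (hy : a ≤ y) (hyb : y < b) (hxy : x ≡ y [MOD p]) :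
    f x = f y := by
  wlog hle : x ≤ y generalizing x y
  · exact (this hy hyb hx hxb hxy.symm (by omega)).symm
  obtain ⟨k, hk⟩ := (Nat.modEq_iff_dvd' hle).1 hxy
  obtain rfl : y = x + p * k := by omega
  clear hxy hle hk hy
  induction k with
  | zero => simp
  | succ k ih =>
    rw [Nat.mul_succ] at hyb ⊢
    rw [ih (by omega), ← hper _ (by omega) hyb]
    congr 1
    omega

section Runs

variable {T : List ℕ} {τ j : ℕ}

lemma length_window (hτ : 1 ≤ τ) (hj : 1 ≤ j) (hjT : j + 3 * τ ≤ T.length + 2) :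
    (sub T j (j + 3 * τ - 1)).length = 3 * τ - 1 := by
  rw [length_sub hj (by omega)]
  omega

lemma one_le_per_window (hτ : 1 ≤ τ) (hj : 1 ≤ j) (hjT : j + 3 * τ ≤ T.length + 2) :
    1 ≤ per (sub T j (j + 3 * τ - 1)) :=
  (per_isPeriod (by rw [length_window hτ hj hjT]; omega)).1

lemma idx_add_per_of_mem_R (hτ : 1 ≤ τ) (hj : j ∈ R T τ) {a : ℕ}
    (ha : a + per (sub T j (j + 3 * τ - 1)) < 3 * τ - 1) :
    idx T (j + a + per (sub T j (j + 3 * τ - 1))) = idx T (j + a) := by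
  obtain ⟨hj1, hjT, -⟩ := hj
  have hlen := length_window hτ hj1 hjT
  have h := (per_isPeriod (S := sub T j (j + 3 * τ - 1)) (by omega)).2.2 a (by omega)
  rw [sub_getD hj1 (by omega), sub_getD hj1 (by omega)] at h
  rw [h, add_assoc]

lemma rend_spec (hj : j ∈ R T τ) :
    ∃ m, rend T τ j = m + 3 * τ - 2 ∧ j < m ∧ m + 3 * τ ≤ T.length + 3 ∧ m ∉ R T τ ∧
      ∀ i, j ≤ i → i < m → i ∈ R T τ := by
  obtain ⟨hj1, hjT, hjper⟩ := hj
  set S := {j' | j ≤ j' ∧ j' ∉ R T τ}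
  have hout : T.length + 3 - 3 * τ ∈ S := ⟨by omega, fun h => by have := h.2.1; omega⟩
  have hmem : sInf S ∈ S := Nat.sInf_mem ⟨_, hout⟩
  refine ⟨sInf S, rfl, ?_, by have := Nat.sInf_le hout; omega, hmem.2, ?_⟩
  · refine lt_of_le_of_ne hmem.1 fun h => hmem.2 ?_
    rw [← h]
    exact ⟨hj1, hjT, hjper⟩
  · intro i hji him
    by_contra hi
    exact absurd (Nat.sInf_le (show i ∈ S from ⟨hji, hi⟩)) (by omega)

lemma le_rend (hj : j ∈ R T τ) : j + 3 * τ - 1 ≤ rend T τ j := by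
  obtain ⟨m, hm, hjm, -⟩ := rend_spec hj
  omega

lemma rend_le (hj : j ∈ R T τ) : rend T τ j ≤ T.length + 1 := by
  obtain ⟨m, hm, -, hmT, -⟩ := rend_spec hj
  omega

/-- Through the window ending at `e`, whose period `q` satisfies `p + q ≤ 3τ - 2`:
`T[e] = T[e - q] = T[e - q - p] = T[e - p]`, the middle step by induction. -/
lemma idx_sub_per_of_lt_rend (hτ : 1 ≤ τ) (hj : j ∈ R T τ) {e : ℕ}
    (hje : j + per (sub T j (j + 3 * τ - 1)) ≤ e) (her : e < rend T τ j) :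
    idx T (e - per (sub T j (j + 3 * τ - 1))) = idx T e := by
  obtain ⟨m, hm, -, -, -, hrun⟩ := rend_spec hj
  have hjper := hj.2.2
  set p := per (sub T j (j + 3 * τ - 1))
  induction e using Nat.strong_induction_on with
  | _ e ih =>
    rcases Nat.lt_or_ge e (j + 3 * τ - 1) with he | he
    · have h := idx_add_per_of_mem_R hτ hj (a := e - p - j) (by omega)
      rwa [show j + (e - p - j) = e - p by omega, show e - p + p = e by omega, eq_comm] at h
    · have hi : e - (3 * τ - 2) ∈ R T τ := hrun _ (by omega) (by omega)
      have hiper := hi.2.2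
      have hq1 := one_le_per_window hτ hi.1 hi.2.1
      set q := per (sub T (e - (3 * τ - 2)) (e - (3 * τ - 2) + 3 * τ - 1))
      have hq := idx_add_per_of_mem_R hτ hi (a := 3 * τ - 2 - q) (by omega)
      have hpq := idx_add_per_of_mem_R hτ hi (a := 3 * τ - 2 - q - p) (by omega)
      rw [show e - (3 * τ - 2) + (3 * τ - 2 - q) = e - q by omega,
        show e - q + q = e by omega] at hq
      rw [show e - (3 * τ - 2) + (3 * τ - 2 - q - p) = e - q - p by omega,
        show e - q - p + q = e - p by omega] at hpq
      rw [hpq, ih (e - q) (by omega) (by omega) (by omega), hq]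

/-- Otherwise the window starting at `rend - 3τ + 2` would still have period `p` and so lie
in `R`. -/
lemma idx_rend_ne (hτ : 1 ≤ τ) (hj : j ∈ R T τ) (hr : rend T τ j ≤ T.length) :
    idx T (rend T τ j) ≠ idx T (rend T τ j - per (sub T j (j + 3 * τ - 1))) := by
  obtain ⟨m, hm, hjm, -, hmR, -⟩ := rend_spec hj
  have hjper := hj.2.2
  have hp := one_le_per_window hτ hj.1 hj.2.1
  set p := per (sub T j (j + 3 * τ - 1))
  intro hbreak
  have hmT : m + 3 * τ ≤ T.length + 2 := by omega
  have hlen := length_window hτ (by omega) hmT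
  have hper : IsPeriod (sub T m (m + 3 * τ - 1)) p := by
    refine ⟨hp, by omega, fun a ha => ?_⟩
    rw [sub_getD (by omega) (by omega), sub_getD (by omega) (by omega)]
    rcases Nat.lt_or_ge (m + (a + p)) (rend T τ j) with h | h
    · rw [← idx_sub_per_of_lt_rend hτ hj (by omega) h, show m + (a + p) - p = m + a by omega]
    · rw [show m + (a + p) = rend T τ j by omega, show m + a = rend T τ j - p by omega]
      exact hbreak.symm
  exact hmR ⟨by omega, hmT, by have := per_le hper; omega⟩

end Runs

section Roots

variable {T : List ℕ} {τ j j' : ℕ}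

lemma exists_Lroot_eq (hτ : 1 ≤ τ) (hj : j ∈ R T τ) :
    ∃ t < per (sub T j (j + 3 * τ - 1)),
      sub T (j + t) (j + t + per (sub T j (j + 3 * τ - 1))) = Lroot T τ j := by
  set S := (Finset.range (per (sub T j (j + 3 * τ - 1)))).image fun t =>
    sub T (j + t) (j + t + per (sub T j (j + 3 * τ - 1)))
  have hS : S.Nonempty :=
    ⟨_, Finset.mem_image_of_mem _ (Finset.mem_range.2 (one_le_per_window hτ hj.1 hj.2.1))⟩
  obtain ⟨t, ht, hteq⟩ := Finset.mem_image.1 (S.min'_mem hS)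
  refine ⟨t, Finset.mem_range.1 ht, ?_⟩
  rw [Lroot, ← Finset.coe_min' hS, hteq]
  rfl

lemma Lhead_spec (hτ : 1 ≤ τ) (hj : j ∈ R T τ) :
    Lhead T τ j < per (sub T j (j + 3 * τ - 1)) ∧
      sub T (j + Lhead T τ j) (j + Lhead T τ j + per (sub T j (j + 3 * τ - 1))) =
        Lroot T τ j :=
  Nat.sInf_mem (exists_Lroot_eq hτ hj)

lemma length_Lroot (hτ : 1 ≤ τ) (hj : j ∈ R T τ) :
    (Lroot T τ j).length = per (sub T j (j + 3 * τ - 1)) := by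
  obtain ⟨hs, hroot⟩ := Lhead_spec hτ hj
  obtain ⟨hj1, hjT, hjper⟩ := hj
  rw [← hroot, length_sub (by omega) (by omega)]
  omega

lemma Lroot_eq_and_Lhead_eq_of_window_eq (hj : j ∈ R T τ) (hj' : 1 ≤ j')
    (hw : sub T j' (j' + 3 * τ - 1) = sub T j (j + 3 * τ - 1)) :
    Lroot T τ j' = Lroot T τ j ∧ Lhead T τ j' = Lhead T τ j := by
  have hjper := hj.2.2
  have hrot : ∀ x < per (sub T j (j + 3 * τ - 1)),
      sub T (j' + x) (j' + x + per (sub T j (j + 3 * τ - 1))) =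
        sub T (j + x) (j + x + per (sub T j (j + 3 * τ - 1))) := by
    intro x hx
    rw [sub_add_eq_take_drop_sub hj' (w := 3 * τ - 1) (by omega),
      sub_add_eq_take_drop_sub hj.1 (w := 3 * τ - 1) (by omega),
      ← Nat.add_sub_assoc (by omega), ← Nat.add_sub_assoc (by omega), hw]
  have hroot : Lroot T τ j' = Lroot T τ j := by
    unfold Lroot
    rw [hw]
    congr 2
    exact Finset.image_congr fun x hx => hrot x (Finset.mem_range.1 hx)
  refine ⟨hroot, ?_⟩
  unfold Lhead
  rw [hw, hroot]
  congr 1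
  exact Set.ext fun x => and_congr_right fun hx => by rw [hrot x hx]

end Roots

/-- `H^∞` shifted so that a copy of `H` starts at position `s`. -/
def rootWord (H : List ℕ) (s i : ℕ) : ℕ := H.getD ((H.length + i - s) % H.length) 0

lemma rootWord_add_length {H : List ℕ} {s : ℕ} (hs : s ≤ H.length) (i : ℕ) :
    rootWord H s (i + H.length) = rootWord H s i := by
  rw [rootWord, rootWord, show H.length + (i + H.length) - s = H.length + i - s + H.length by omega,
    Nat.add_mod_right]

lemma idx_eq_rootWord {T : List ℕ} {τ j i : ℕ} (hτ : 1 ≤ τ) (hj : j ∈ R T τ)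
    (hi : i < rend T τ j - j) :
    idx T (j + i) = rootWord (Lroot T τ j) (Lhead T τ j) i := by
  obtain ⟨hs, hroot⟩ := Lhead_spec hτ hj
  have hrend := le_rend hj
  have hj1 := hj.1
  have hr := Nat.mod_lt (per (sub T j (j + 3 * τ - 1)) + i - Lhead T τ j) (Nat.zero_lt_of_lt hs)
  rw [rootWord, length_Lroot hτ hj, ← hroot, sub_getD (by omega) (by omega)]
  refine eq_of_modEq_of_periodicOn (a := j) (b := rend T τ j)
    (fun e h1 h2 => idx_sub_per_of_lt_rend hτ hj h1 h2) (by omega) (by omega)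
    (by omega) (by have := hj.2.2; omega) ?_
  generalize per (sub T j (j + 3 * τ - 1)) = p at hs ⊢
  generalize Lhead T τ j = s at hs ⊢
  unfold Nat.ModEq
  rw [Nat.add_mod (j + s), Nat.mod_mod, ← Nat.add_mod,
    show j + s + (p + i - s) = j + i + p by omega, Nat.add_mod_right]

section Block

variable {T : List ℕ} {τ s j j' : ℕ} {H : List ℕ}

lemma typ_eq_one_or_eq_neg_one (T : List ℕ) (τ j : ℕ) : typ T τ j = 1 ∨ typ T τ j = -1 := by
  unfold typ
  split_ifs <;> simp

lemma per_window_eq_length (hτ : 1 ≤ τ) (hj : j ∈ RsH T τ s H) :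
    per (sub T j (j + 3 * τ - 1)) = H.length := by
  rw [← hj.2.1, length_Lroot hτ hj.1]

lemma rend_sub_le_length_suf (hj : j ∈ R T τ) : rend T τ j - j ≤ (suf T j).length := by
  rw [length_suf]
  have := rend_le hj
  have := hj.1
  omega

lemma suf_getD_eq_rootWord (hτ : 1 ≤ τ) (hj : j ∈ RsH T τ s H) {i : ℕ}
    (hi : i < rend T τ j - j) : (suf T j).getD i 0 = rootWord H s i := by
  rw [suf_getD hj.1.1, idx_eq_rootWord hτ hj.1 hi, hj.2.1, hj.2.2]

lemma idx_rend_sub_length_eq_rootWord (hτ : 1 ≤ τ) (hj : j ∈ RsH T τ s H) :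
    idx T (rend T τ j - H.length) = rootWord H s (rend T τ j - j) := by
  have hH := per_window_eq_length hτ hj
  have hs := (Lhead_spec hτ hj.1).1
  rw [hj.2.2, hH] at hs
  have hjper := hj.1.2.2
  have hrend := le_rend hj.1
  have h := idx_eq_rootWord hτ hj.1 (i := rend T τ j - j - H.length) (by omega)
  rw [hj.2.1, hj.2.2, show j + (rend T τ j - j - H.length) = rend T τ j - H.length by omega] at h
  rw [h, ← rootWord_add_length hs.le, show rend T τ j - j - H.length + H.length = rend T τ j - j by
    omega]

lemma exitsAbove_of_typ_eq_one (hτ : 1 ≤ τ) (hj : j ∈ RsH T τ s H) (h : typ T τ j = 1) :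
    ExitsAbove (suf T j) (rootWord H s) (rend T τ j - j) := by
  have hrend := le_rend hj.1
  have hj1 := hj.1.1
  unfold typ at h
  split_ifs at h with hup
  obtain ⟨hr, hlt⟩ := hup
  rw [per_window_eq_length hτ hj, idx_rend_sub_length_eq_rootWord hτ hj] at hlt
  refine ⟨by rw [length_suf]; omega, ?_⟩
  rwa [suf_getD hj1, show j + (rend T τ j - j) = rend T τ j by omega]

lemma exitsBelow_of_typ_eq_neg_one (hτ : 1 ≤ τ) (hj : j ∈ RsH T τ s H) (h : typ T τ j = -1) :
    ExitsBelow (suf T j) (rootWord H s) (rend T τ j - j) := by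
  have hrend := le_rend hj.1
  have hj1 := hj.1.1
  rcases (rend_le hj.1).lt_or_eq with hr | hr
  · have hne := idx_rend_ne hτ hj.1 (by omega)
    unfold typ at h
    split_ifs at h with hup
    rw [per_window_eq_length hτ hj, idx_rend_sub_length_eq_rootWord hτ hj] at hne hup
    refine Or.inr ⟨by rw [length_suf]; omega, ?_⟩
    rw [suf_getD hj1, show j + (rend T τ j - j) = rend T τ j by omega]
    omega
  · left
    rw [length_suf]
    omega

/-- The order of two suffixes from `R_{s,H}` in terms of their types `e, e'` and the lengths
`t, t'` of their runs. -/
def ExitPrecedes (e e' : ℤ) (t t' : ℕ) : Prop :=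
  (e = -1 ∧ e' = -1 ∧ t < t') ∨ (e = 1 ∧ e' = 1 ∧ t' < t) ∨ (e = -1 ∧ e' = 1)

lemma ExitPrecedes.not_symm {e e' : ℤ} {t t' : ℕ} (h : ExitPrecedes e e' t t') :
    ¬ExitPrecedes e' e t' t := by
  unfold ExitPrecedes at *
  omega

lemma exitPrecedes_or_exitPrecedes {e e' : ℤ} {t t' : ℕ} (he : e = 1 ∨ e = -1)
    (he' : e' = 1 ∨ e' = -1) (hne : e ≠ e' ∨ t ≠ t') :
    ExitPrecedes e e' t t' ∨ ExitPrecedes e' e t' t := by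
  unfold ExitPrecedes
  omega

lemma min_le_LCE (hτ : 1 ≤ τ) (hj : j ∈ RsH T τ s H) (hj' : j' ∈ RsH T τ s H) :
    min (rend T τ j - j) (rend T τ j' - j') ≤ LCE T j j' := by
  have := rend_sub_le_length_suf hj.1
  have := rend_sub_le_length_suf hj'.1
  refine le_lcp_of_getD_eq (by omega) (by omega) fun i hi => ?_
  rw [suf_getD_eq_rootWord hτ hj (by omega), suf_getD_eq_rootWord hτ hj' (by omega)]

lemma suf_lt_and_LCE_eq_of_exitPrecedes (hτ : 1 ≤ τ) (hj : j ∈ RsH T τ s H)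
    (hj' : j' ∈ RsH T τ s H)
    (h : ExitPrecedes (typ T τ j) (typ T τ j') (rend T τ j - j) (rend T τ j' - j')) :
    suf T j < suf T j' ∧ LCE T j j' = min (rend T τ j - j) (rend T τ j' - j') := by
  refine lt_and_lcp_eq_of_exits (fun i hi => suf_getD_eq_rootWord hτ hj hi)
    (fun i hi => suf_getD_eq_rootWord hτ hj' hi) (rend_sub_le_length_suf hj.1)
    (rend_sub_le_length_suf hj'.1) ?_
  rcases h with ⟨he, -, hlt⟩ | ⟨-, he', hlt⟩ | ⟨he, he'⟩
  · exact Or.inl ⟨exitsBelow_of_typ_eq_neg_one hτ hj he, hlt⟩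
  · exact Or.inr (Or.inl ⟨exitsAbove_of_typ_eq_one hτ hj' he', hlt⟩)
  · exact Or.inr (Or.inr ⟨exitsBelow_of_typ_eq_neg_one hτ hj he,
      exitsAbove_of_typ_eq_one hτ hj' he'⟩)

lemma suf_lt_iff_exitPrecedes_and_LCE_eq (hτ : 1 ≤ τ) (hj : j ∈ RsH T τ s H)
    (hj' : j' ∈ RsH T τ s H)
    (hne : typ T τ j ≠ typ T τ j' ∨ rend T τ j - j ≠ rend T τ j' - j') :
    (suf T j < suf T j' ↔
        ExitPrecedes (typ T τ j) (typ T τ j') (rend T τ j - j) (rend T τ j' - j')) ∧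
      LCE T j j' = min (rend T τ j - j) (rend T τ j' - j') := by
  rcases exitPrecedes_or_exitPrecedes (typ_eq_one_or_eq_neg_one T τ j)
    (typ_eq_one_or_eq_neg_one T τ j') hne with h | h
  · obtain ⟨hlt, hlcp⟩ := suf_lt_and_LCE_eq_of_exitPrecedes hτ hj hj' h
    exact ⟨iff_of_true hlt h, hlcp⟩
  · obtain ⟨hlt, hlcp⟩ := suf_lt_and_LCE_eq_of_exitPrecedes hτ hj' hj h
    refine ⟨iff_of_false (List.lt_asymm hlt) h.not_symm, ?_⟩
    rw [LCE, lcp_comm, min_comm]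
    exact hlcp

lemma mem_RsH_of_le_LCE (hτ : 1 ≤ τ) (hj : j ∈ RsH T τ s H) (hj' : 1 ≤ j')
    (h : 3 * τ - 1 ≤ LCE T j j') : j' ∈ RsH T τ s H := by
  have hlen := h.trans (lcp_le_length_right _ _)
  rw [length_suf] at hlen
  have hw : sub T j' (j' + 3 * τ - 1) = sub T j (j + 3 * τ - 1) := by
    rw [Nat.add_sub_assoc (by omega), Nat.add_sub_assoc (by omega), sub_add_eq_take_suf,
      sub_add_eq_take_suf]
    exact (take_eq_take_of_le_lcp h).symm
  obtain ⟨hroot, hhead⟩ := Lroot_eq_and_Lhead_eq_of_window_eq hj.1 hj' hw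
  exact ⟨⟨hj', by omega, hw ▸ hj.1.2.2⟩, hroot.trans hj.2.1, hhead.trans hj.2.2⟩

end Block

theorem statement_1_general
    (n τ : ℕ) (T : List ℕ)
    (hτ : 1 ≤ τ)
    (s : ℕ) (H : List ℕ) (j : ℕ) (hj : j ∈ RsH T τ s H) :
    (∀ j', 1 ≤ j' → j' ≤ n → (3 * τ - 1 ≤ LCE T j j' ↔ j' ∈ RsH T τ s H)) ∧
    (∀ j' ∈ RsH T τ s H, ∀ t t' : ℕ,
      t = rend T τ j - j → t' = rend T τ j' - j' →
      min t t' ≤ LCE T j j' ∧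
      (typ T τ j ≠ typ T τ j' → (suf T j < suf T j' ↔ typ T τ j < typ T τ j')) ∧
      (typ T τ j = -1 → typ T τ j' = -1 → t ≠ t' → (suf T j < suf T j' ↔ t < t')) ∧
      (typ T τ j = 1 → typ T τ j' = 1 → t ≠ t' → (suf T j < suf T j' ↔ t' < t)) ∧
      ((typ T τ j ≠ typ T τ j' ∨ t ≠ t') → LCE T j j' = min t t')) := by
  refine ⟨fun j' hj' _ => ⟨mem_RsH_of_le_LCE hτ hj hj', fun hj'R => ?_⟩, ?_⟩
  · have := le_rend hj.1
    have := le_rend hj'R.1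
    have := min_le_LCE hτ hj hj'R
    omega
  rintro j' hj' t t' rfl rfl
  have hcmp := suf_lt_iff_exitPrecedes_and_LCE_eq hτ hj hj'
  refine ⟨min_le_LCE hτ hj hj', fun hne => ?_, fun h h' hne => ?_, fun h h' hne => ?_,
    fun hne => (hcmp hne).2⟩
  · rw [(hcmp (Or.inl hne)).1]
    rcases typ_eq_one_or_eq_neg_one T τ j with h | h <;>
      rcases typ_eq_one_or_eq_neg_one T τ j' with h' | h' <;>
      simp [ExitPrecedes, h, h'] at hne ⊢
  · rw [(hcmp (Or.inr hne)).1]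
    simp [ExitPrecedes, h, h']
  · rw [(hcmp (Or.inr hne)).1]
    simp [ExitPrecedes, h, h']

/-- Lemma: structure of the SA-block of `R_{s,H}`. -/
theorem statement_1
    (σ n τ : ℕ) (T : List ℕ)
    (hσ : 2 ≤ σ) (hn : 2 ≤ n) (hτ : 1 ≤ τ)
    (hlen : T.length = n) (halph : ∀ c ∈ T, c < σ)
    (hlast : idx T n = 0) (huniq : ∀ i, 1 ≤ i → i < n → idx T i ≠ 0)
    (s : ℕ) (H : List ℕ) (j : ℕ) (hj : j ∈ RsH T τ s H) :
    (∀ j', 1 ≤ j' → j' ≤ n → (3 * τ - 1 ≤ LCE T j j' ↔ j' ∈ RsH T τ s H)) ∧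
    (∀ j' ∈ RsH T τ s H, ∀ t t' : ℕ,
      t = rend T τ j - j → t' = rend T τ j' - j' →
      min t t' ≤ LCE T j j' ∧
      (typ T τ j ≠ typ T τ j' → (suf T j < suf T j' ↔ typ T τ j < typ T τ j')) ∧
      (typ T τ j = -1 → typ T τ j' = -1 → t ≠ t' → (suf T j < suf T j' ↔ t < t')) ∧
      (typ T τ j = 1 → typ T τ j' = 1 → t ≠ t' → (suf T j < suf T j' ↔ t' < t)) ∧
      ((typ T τ j ≠ typ T τ j' ∨ t ≠ t') → LCE T j j' = min t t')) :=
  statement_1_general n τ T hτ s H j hj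
end CSA
end

section
/- For any j, j′ ∈ R′, if j ≠ j′ then rendfull(j) ≠ rendfull(j′). -/
open scoped Classical

namespace CSA

/-!
Suppose `j < j'` lie in `R′` and `rendfull j = rendfull j' =: E`. As `j' - 1 ∉ R`, the run of `j`
ends before `j'`, so the last window of that run, with period `q`, covers `[j' - 1, E)`. The window
at `j'` has minimal period `p`, and `E > rend j' - p`, so `[j', E)` is long enough for the theorem
of Fine and Wilf: `gcd p q` is a period of `[j', E)`, and it propagates along `p` to the whole window
at `j'`. Minimality of `p` gives `p ∣ q`, hence `T[j'-1] = T[j'-1+q] = T[j'-1+p]`, so the window at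
`j' - 1` has period `p` as well and `j' - 1 ∈ R`, a contradiction.
-/

section Periods

variable {α : Type*} {f : ℕ → α} {p q a b c : ℕ}

def HasPeriodOn (f : ℕ → α) (p a b : ℕ) : Prop :=
  ∀ x, a ≤ x → x + p < b → f x = f (x + p)

theorem hasPeriodOn_iff_hasPeriod_map_range' :
    HasPeriodOn f p a b ↔ ((List.range' a (b - a)).map f).HasPeriod p := by
  rw [List.hasPeriod_iff_getElem?]
  simp only [List.length_map, List.length_range', List.getElem?_map]
  constructor
  · intro h i hi
    rw [List.getElem?_range' (by omega), List.getElem?_range' (by omega)]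
    simpa [add_assoc] using h (a + i) (by omega) (by omega)
  · intro h x hx hxb
    have := h (x - a) (by omega)
    rw [List.getElem?_range' (by omega), List.getElem?_range' (by omega)] at this
    simpa [show a + (x - a) = x by omega, show a + (x - a + p) = x + p by omega] using this

theorem HasPeriodOn.mono (h : HasPeriodOn f p a b) {a' b' : ℕ} (ha : a ≤ a') (hb : b' ≤ b) :
    HasPeriodOn f p a' b' :=
  fun x hx hxb => h x (ha.trans hx) (by omega)

theorem HasPeriodOn.gcd (hp : HasPeriodOn f p a b) (hq : HasPeriodOn f q a b)
    (hlen : p + q - p.gcd q ≤ b - a) : HasPeriodOn f (p.gcd q) a b := by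
  rw [hasPeriodOn_iff_hasPeriod_map_range'] at *
  exact hp.gcd hq (by simpa using hlen)

theorem HasPeriodOn.of_dvd (hp : HasPeriodOn f p a b) (hpq : p ∣ q) : HasPeriodOn f q a b := by
  obtain ⟨k, rfl⟩ := hpq
  induction k with
  | zero => intro x _ _; simp
  | succ k ih =>
    intro x hx hxb
    rw [Nat.mul_succ, ← add_assoc] at hxb ⊢
    exact (ih x hx (by omega)).trans (hp _ (by omega) hxb)

theorem HasPeriodOn.extend_left (hp : HasPeriodOn f p (a + 1) b) (ha : f a = f (a + p)) :
    HasPeriodOn f p a b := by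
  intro x hx hxb
  rcases hx.eq_or_lt with rfl | hlt
  · exact ha
  · exact hp x hlt hxb

theorem HasPeriodOn.extend_right (hg : HasPeriodOn f q a c) (hp : HasPeriodOn f p a b)
    (hc : a + p + q ≤ c) (hb : b < c + p) : HasPeriodOn f q a b := by
  intro x hx hxb
  by_cases hxc : x + q < c
  · exact hg x hx hxc
  obtain ⟨y, rfl⟩ : ∃ y, x = y + p := ⟨x - p, by omega⟩
  calc f (y + p) = f y := (hp y (by omega) (by omega)).symm
    _ = f (y + q) := hg y (by omega) (by omega)
    _ = f (y + p + q) := by rw [add_right_comm]; exact hp _ (by omega) (by omega)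

theorem HasPeriodOn.extend_left_of_overlap (hp : HasPeriodOn f p (a + 1) b)
    (hmin : ∀ r, 0 < r → r ≤ p → HasPeriodOn f r (a + 1) b → p ≤ r)
    (hq : HasPeriodOn f q a c) (hp0 : 0 < p) (hq0 : 0 < q)
    (hc : a + 1 + p + q ≤ c) (hcb : c ≤ b) (hbc : b < c + p) :
    HasPeriodOn f p a b := by
  have hgcd : HasPeriodOn f (q.gcd p) (a + 1) b :=
    ((hq.mono (by omega) le_rfl).gcd (hp.mono le_rfl hcb) (by omega)).extend_right hp
      (by have := Nat.gcd_le_left p hq0; omega) hbc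
  have hpq : p ∣ q := by
    have hle : q.gcd p ≤ p := Nat.gcd_le_right (m := q) hp0
    rw [← le_antisymm hle (hmin _ (Nat.gcd_pos_of_pos_right q hp0) hle hgcd)]
    exact Nat.gcd_dvd_left q p
  refine hp.extend_left ?_
  calc f a = f (a + q) := hq a le_rfl (by omega)
    _ = f (a + p + (q - p)) := by rw [add_assoc, Nat.add_sub_cancel' (Nat.le_of_dvd hq0 hpq)]
    _ = f (a + p) := (hp.of_dvd (Nat.dvd_sub hpq dvd_rfl) (a + p) (by omega) (by omega)).symm

end Periods

theorem isPeriod_iff_hasPeriod {S : List ℕ} {p : ℕ} :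
    IsPeriod S p ↔ 0 < p ∧ p ≤ S.length ∧ S.HasPeriod p := by
  rw [List.hasPeriod_iff_getElem?]
  refine and_congr Iff.rfl (and_congr_right fun _ => ⟨fun h i hi => ?_, fun h i hi => ?_⟩)
  · have := h i (by omega)
    rwa [List.getD_eq_getElem _ _ (by omega), List.getD_eq_getElem _ _ (by omega),
      ← Option.some_inj, ← List.getElem?_eq_getElem, ← List.getElem?_eq_getElem] at this
  · rw [List.getD_eq_getElem?_getD, List.getD_eq_getElem?_getD, h i (by omega)]

theorem sub_eq_map_range' {T : List ℕ} {a b : ℕ} (ha : 1 ≤ a) (hb : b ≤ T.length + 1) :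
    sub T a b = (List.range' a (b - a)).map (idx T) := by
  refine List.ext_getElem (by simp [sub]; omega) fun i h₁ h₂ => ?_
  simp only [sub, List.getElem_take, List.getElem_drop, List.getElem_map, List.getElem_range',
    idx, List.getD_eq_getElem?_getD]
  rw [List.getElem?_eq_getElem (by simp [sub] at h₁; omega)]
  simp only [Option.getD_some]
  congr 1
  omega

theorem isPeriod_sub_iff {T : List ℕ} {a b p : ℕ} (ha : 1 ≤ a) (hb : b ≤ T.length + 1) :
    IsPeriod (sub T a b) p ↔ 0 < p ∧ p ≤ b - a ∧ HasPeriodOn (idx T) p a b := by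
  rw [isPeriod_iff_hasPeriod, hasPeriodOn_iff_hasPeriod_map_range', sub_eq_map_range' ha hb]
  simp

theorem isPeriod_per {S : List ℕ} (hS : S ≠ []) : IsPeriod S (per S) :=
  Nat.sInf_mem (s := {p | IsPeriod S p})
    ⟨S.length, List.length_pos_iff.mpr hS, le_rfl, fun i hi => by omega⟩

section Runs

variable {T : List ℕ} {τ i j : ℕ}

theorem mem_R_of_hasPeriodOn {r : ℕ} (hi : 1 ≤ i) (hiT : i + 3 * τ ≤ T.length + 2)
    (hr : 0 < r) (hrτ : 3 * r ≤ τ) (h : HasPeriodOn (idx T) r i (i + 3 * τ - 1)) :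
    i ∈ R T τ := by
  have hper : per (sub T i (i + 3 * τ - 1)) ≤ r :=
    Nat.sInf_le ((isPeriod_sub_iff hi (by omega)).mpr ⟨hr, by omega, h⟩)
  exact ⟨hi, hiT, by omega⟩

theorem hasPeriodOn_per_of_mem_R (hτ : 1 ≤ τ) (hi : i ∈ R T τ) :
    0 < per (sub T i (i + 3 * τ - 1)) ∧
    HasPeriodOn (idx T) (per (sub T i (i + 3 * τ - 1))) i (i + 3 * τ - 1) ∧
    ∀ r, 0 < r → r ≤ per (sub T i (i + 3 * τ - 1)) →
      HasPeriodOn (idx T) r i (i + 3 * τ - 1) → per (sub T i (i + 3 * τ - 1)) ≤ r := by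
  obtain ⟨hi1, hiT, -⟩ := hi
  have hsub (r : ℕ) := isPeriod_sub_iff (T := T) (p := r) hi1 (b := i + 3 * τ - 1) (by omega)
  have hne : sub T i (i + 3 * τ - 1) ≠ [] := by
    rw [← List.length_pos_iff, sub_eq_map_range' hi1 (by omega)]
    simp only [List.length_map, List.length_range']
    omega
  obtain ⟨hpos, hle, hper⟩ := (hsub _).mp (isPeriod_per hne)
  exact ⟨hpos, hper, fun r hr hrp h => Nat.sInf_le ((hsub r).mpr ⟨hr, by omega, h⟩)⟩

variable (T τ j) in
/-- The `min{j′ ≥ j : j′ ∉ R}` in the definition of `rend`. -/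
noncomputable def runEnd : ℕ := sInf {j' | j ≤ j' ∧ j' ∉ R T τ}

theorem runEnd_le {k : ℕ} (hjk : j ≤ k) (hk : k ∉ R T τ) : runEnd T τ j ≤ k :=
  Nat.sInf_le ⟨hjk, hk⟩

theorem runEnd_mem (hτ : 1 ≤ τ) : j ≤ runEnd T τ j ∧ runEnd T τ j ∉ R T τ :=
  Nat.sInf_mem (s := {j' | j ≤ j' ∧ j' ∉ R T τ})
    ⟨max j (T.length + 1), le_max_left _ _, fun h => by have := h.2.1; omega⟩

theorem lt_runEnd (hτ : 1 ≤ τ) (hj : j ∈ R T τ) : j < runEnd T τ j := by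
  obtain ⟨hle, hnot⟩ := runEnd_mem (T := T) (j := j) hτ
  exact hle.lt_of_ne fun h => hnot (h ▸ hj)

theorem runEnd_sub_one_mem_R (hτ : 1 ≤ τ) (hj : j ∈ R T τ) : runEnd T τ j - 1 ∈ R T τ := by
  have := lt_runEnd hτ hj
  by_contra h
  exact Nat.notMem_of_lt_sInf (show runEnd T τ j - 1 < runEnd T τ j by omega) ⟨by omega, h⟩

theorem rend_lt_rendfull_add_per (hτ : 1 ≤ τ) (hj : j ∈ R T τ) :
    rend T τ j < rendfull T τ j + per (sub T j (j + 3 * τ - 1)) := by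
  have hpos := (hasPeriodOn_per_of_mem_R hτ hj).1
  have hmod := Nat.mod_le (rend T τ j - j - Lhead T τ j) (per (sub T j (j + 3 * τ - 1)))
  have hlt := Nat.mod_lt (rend T τ j - j - Lhead T τ j) hpos
  unfold rendfull Ltail
  omega

end Runs

theorem rendfull_ne_of_lt {T : List ℕ} {τ j j' : ℕ} (hτ : 1 ≤ τ) (hj : j ∈ R T τ)
    (hj' : j' ∈ Rprime T τ) (hlt : j < j') : rendfull T τ j ≠ rendfull T τ j' := by
  obtain ⟨a, rfl⟩ : ∃ a, j' = a + 1 := ⟨j' - 1, by omega⟩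
  obtain ⟨hj'R, hpred⟩ := hj'
  rw [Nat.add_sub_cancel] at hpred
  intro heq
  apply hpred
  have hm : runEnd T τ j ≤ a := runEnd_le (by omega) hpred
  have hmR := runEnd_sub_one_mem_R hτ hj
  obtain ⟨hq0, hq, -⟩ := hasPeriodOn_per_of_mem_R hτ hmR
  obtain ⟨hp0, hp, hmin⟩ := hasPeriodOn_per_of_mem_R hτ hj'R
  have hrend : rend T τ (a + 1) = runEnd T τ (a + 1) + 3 * τ - 2 := rfl
  have hrun' := lt_runEnd hτ hj'R
  have htail := rend_lt_rendfull_add_per hτ hj'R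
  have hfull : rendfull T τ j ≤ runEnd T τ j + 3 * τ - 2 := Nat.sub_le _ _
  have hq3 := hmR.2.2
  have hp3 := hj'R.2.2
  have hpred_per := hp.extend_left_of_overlap hmin (hq.mono (a' := a) (b' := rendfull T τ (a + 1))
    (by omega) (by omega)) hp0 hq0 (by omega) (by omega) (by omega)
  exact mem_R_of_hasPeriodOn (by have := hj.1; omega) (by have := hj'R.2.1; omega) hp0
    (by omega) (hpred_per.mono le_rfl (by omega))

theorem statement_4_general
    (τ : ℕ) (T : List ℕ)
    (hτ : 1 ≤ τ)
    : ∀ j ∈ Rprime T τ, ∀ j' ∈ Rprime T τ, j ≠ j' →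
      rendfull T τ j ≠ rendfull T τ j' := by
  intro j hj j' hj' hne
  rcases hne.lt_or_gt with hlt | hlt
  · exact rendfull_ne_of_lt hτ hj.1 hj' hlt
  · exact (rendfull_ne_of_lt hτ hj'.1 hj hlt).symm

/-- Lemma: injectivity of `rendfull` on `R′`. -/
theorem statement_4
    (σ n τ : ℕ) (T : List ℕ)
    (hσ : 2 ≤ σ) (hn : 2 ≤ n) (hτ : 1 ≤ τ)
    (hlen : T.length = n) (halph : ∀ c ∈ T, c < σ)
    (hlast : idx T n = 0) (huniq : ∀ i, 1 ≤ i → i < n → idx T i ≠ 0)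
    : ∀ j ∈ Rprime T τ, ∀ j' ∈ Rprime T τ, j ≠ j' →
      rendfull T τ j ≠ rendfull T τ j' :=
  statement_4_general τ T hτ
end CSA
end
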